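/- Let X be a locally finite, infinite, connected graph whose divergence function Div_{X,γ,δ}(n) is bounded above by a linear function of n, for some constants 0 < δ < 1 and γ ≥ 0. Then for every Floyd function f, the Floyd boundary ∂_f X consists of exactly one point. -/
import Mathlib


open Filter
open scoped ENNReal

universe u

namespace FloydPaper

/-- A **Floyd function**: `f : {1,2,...} → (0,∞)` (modelled as `f : ℕ → ℝ` with `f 0 := f 1`)
such that there is `K ≥ 1` with `1 ≤ f n / f (n+1) ≤ K` for all `n ≥ 1`, and `∑ f n < ∞`. -/
structure IsFloydFunction (f : ℕ → ℝ) : Prop where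
  pos : ∀ n : ℕ, 0 < f n
  zero_eq : f 0 = f 1
  ratio : ∃ K : ℝ, 1 ≤ K ∧ ∀ n : ℕ, 1 ≤ n → 1 ≤ f n / f (n + 1) ∧ f n / f (n + 1) ≤ K
  summable : Summable fun n : ℕ => f (n + 1)

variable {V : Type u}

/-- The Floyd length of an (oriented) edge: `f` applied to the graph distance from the
basepoint `b` to the nearer endpoint of the edge. -/
noncomputable def edgeFloydLength (G : SimpleGraph V) (f : ℕ → ℝ) (b : V) (e : G.Dart) : ℝ :=
  f (min (G.dist b e.toProd.1) (G.dist b e.toProd.2))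

/-- The Floyd length of an edge path (walk): the sum of the Floyd lengths of its edges. -/
noncomputable def floydLength (G : SimpleGraph V) (f : ℕ → ℝ) (b : V) {u v : V}
    (p : G.Walk u v) : ℝ :=
  (p.darts.map (edgeFloydLength G f b)).sum

/-- The Floyd distance between two vertices: the infimum of the Floyd lengths of edge paths
joining them. -/
noncomputable def floydDist (G : SimpleGraph V) (f : ℕ → ℝ) (b : V) (u v : V) : ℝ :=
  sInf {L : ℝ | ∃ p : G.Walk u v, floydLength G f b p = L}

/-- An edge path `p` is a `C`-quasi-geodesic if for all vertices `v, v'` on `p`,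
`(1/C) d(v,v') - C ≤ |p(v,v')| ≤ C d(v,v') + C`, where `|p(v,v')|` is the number of edges of
the subpath of `p` between them. -/
def IsQuasiGeodesicWalk (G : SimpleGraph V) (C : ℝ) {u v : V} (p : G.Walk u v) : Prop :=
  ∀ i j : ℕ, i ≤ j → j ≤ p.length →
    (1 / C) * (G.dist (p.getVert i) (p.getVert j) : ℝ) - C ≤ ((j : ℝ) - (i : ℝ)) ∧
      ((j : ℝ) - (i : ℝ)) ≤ C * (G.dist (p.getVert i) (p.getVert j) : ℝ) + C

/-- A sequence of vertices escapes to infinity if it eventually leaves every ball about the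
basepoint. -/
def Escapes (G : SimpleGraph V) (b : V) (s : ℕ → V) : Prop :=
  ∀ n : ℕ, ∃ N : ℕ, ∀ m : ℕ, N ≤ m → n < G.dist b (s m)

/-- A sequence of vertices is Cauchy for the Floyd distance. -/
def IsFloydCauchy (G : SimpleGraph V) (f : ℕ → ℝ) (b : V) (s : ℕ → V) : Prop :=
  ∀ ε : ℝ, 0 < ε → ∃ N : ℕ, ∀ m n : ℕ, N ≤ m → N ≤ n →
    floydDist G f b (s m) (s n) < ε

/-- The sequences representing points of the Floyd boundary: Floyd-Cauchy sequences escaping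
to infinity (for an infinite, connected, locally finite graph these are exactly the Cauchy
sequences with no limit in the vertex set, since vertices are isolated in the Floyd metric). -/
def BoundarySeq (G : SimpleGraph V) (f : ℕ → ℝ) (b : V) : Type u :=
  {s : ℕ → V // IsFloydCauchy G f b s ∧ Escapes G b s}

/-- Two boundary sequences represent the same boundary point iff the Floyd distance between
them tends to `0`. -/
def BoundaryRel (G : SimpleGraph V) (f : ℕ → ℝ) (b : V)
    (s t : BoundarySeq G f b) : Prop :=
  Tendsto (fun n => floydDist G f b (s.1 n) (t.1 n)) atTop (nhds 0)

/-- The Floyd boundary `∂_f X`: the set of points of the Cauchy completion of the vertex set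
with the Floyd metric which do not lie in the vertex set. -/
def FloydBoundary (G : SimpleGraph V) (f : ℕ → ℝ) (b : V) : Type u :=
  Quot (BoundaryRel G f b)

/-- The Floyd boundary consists of exactly one point. -/
def FloydBoundaryOnePoint (G : SimpleGraph V) (f : ℕ → ℝ) (b : V) : Prop :=
  ∃ p : FloydBoundary G f b, ∀ q : FloydBoundary G f b, q = p

/-- The Floyd boundary is trivial: it has at most two points. -/
def FloydBoundaryTrivial (G : SimpleGraph V) (f : ℕ → ℝ) (b : V) : Prop :=
  ∀ p q r : FloydBoundary G f b, p = q ∨ p = r ∨ q = r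

/-- The divergence function `Div_{X,γ,δ}(n)` of a graph: the sup over triples `x, y, c` of
vertices with `r := d(c,{x,y}) > 0` and `d(x,y) ≤ n` of the infimum of the lengths of edge
paths from `x` to `y` avoiding the ball of radius `δr - γ` about `c` (`∞` if none exists). -/
noncomputable def graphDivergence (G : SimpleGraph V) (γ δ : ℝ) (n : ℕ) : ℝ≥0∞ :=
  ⨆ x : V, ⨆ y : V, ⨆ c : V,
    ⨆ _ : 0 < min (G.dist c x) (G.dist c y) ∧ G.dist x y ≤ n,
      ⨅ p : {p : G.Walk x y // ∀ z ∈ p.support,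
          δ * (↑(min (G.dist c x) (G.dist c y)) : ℝ) - γ < (G.dist c z : ℝ)},
        (p.1.length : ℝ≥0∞)

/-- `α : ℝ → X` is a (bi-infinite) `C`-quasi-geodesic for the distance function `d`. -/
def IsQuasiGeodesicMap {X : Type u} (d : X → X → ℝ) (C : ℝ) (α : ℝ → X) : Prop :=
  ∀ s t : ℝ, (1 / C) * |s - t| - C ≤ d (α s) (α t) ∧ d (α s) (α t) ≤ C * |s - t| + C

/-- `α : [0,∞) → X` is a `C`-quasi-geodesic ray for the distance function `d`. -/
def IsQuasiGeodesicRay {X : Type u} (d : X → X → ℝ) (C : ℝ) (α : ℝ → X) : Prop :=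
  ∀ s t : ℝ, 0 ≤ s → 0 ≤ t →
    (1 / C) * |s - t| - C ≤ d (α s) (α t) ∧ d (α s) (α t) ≤ C * |s - t| + C

/-- The length of a discrete path (chain) in a space with distance function `d`. -/
noncomputable def chainLength {X : Type u} (d : X → X → ℝ) (p : List X) : ℝ :=
  ((p.zip p.tail).map fun q => d q.1 q.2).sum

/-- The divergence function of a metric space (with distance function `d`), where paths are
taken to be discrete paths with steps of size at most `1` (for a graph these correspond to
edge paths). -/
noncomputable def divergence {X : Type u} (d : X → X → ℝ) (γ δ : ℝ) (n : ℕ) : ℝ≥0∞ :=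
  ⨆ x : X, ⨆ y : X, ⨆ c : X,
    ⨆ _ : 0 < min (d c x) (d c y) ∧ d x y ≤ (n : ℝ),
      ⨅ p : {p : List X // p.Chain' (fun w z => d w z ≤ 1) ∧ p.head? = some x ∧
          p.getLast? = some y ∧ ∀ z ∈ p, δ * min (d c x) (d c y) - γ < d c z},
        ENNReal.ofReal (chainLength d p.1)

/-- A space is `C`-wide if every point is within `C` of a bi-infinite `C`-quasi-geodesic and
its divergence is bounded above by a linear function for some `0 < δ < 1`, `γ ≥ 0`. -/
def IsWide (X : Type u) (d : X → X → ℝ) (C : ℝ) : Prop :=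
  (∀ x : X, ∃ α : ℝ → X, IsQuasiGeodesicMap d C α ∧ ∃ t : ℝ, d x (α t) ≤ C) ∧
  ∃ δ γ : ℝ, 0 < δ ∧ δ < 1 ∧ 0 ≤ γ ∧
    ∃ A B : ℝ, ∀ n : ℕ, divergence d γ δ n ≤ ENNReal.ofReal (A * n + B)

/-- The induced distance function on a subset. -/
def restrictDist {X : Type u} (d : X → X → ℝ) (Y : Set X) : ↥Y → ↥Y → ℝ :=
  fun a b => d a b

/-- A subset has infinite diameter. -/
def InfiniteDiam {X : Type u} (d : X → X → ℝ) (S : Set X) : Prop :=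
  ∀ M : ℝ, ∃ x ∈ S, ∃ y ∈ S, M < d x y

/-- `X` is `C`-thick of order at most `k`: thick of order `0` means wide, and thick of order
at most `k+1` means there is a collection `𝒴` of subsets whose `C`-neighborhoods cover `X`,
each of which is `C`-thick of order at most `k` in the induced metric, and any two of which
are connected by a finite chain of members of `𝒴` with consecutive ones having
infinite-diameter intersection `N_C(Y_i) ∩ Y_{i+1}`. -/
def IsThickLE : ℕ → (X : Type u) → (X → X → ℝ) → ℝ → Prop
  | 0, X, d, C => IsWide X d C
  | k + 1, X, d, C =>
      ∃ 𝒴 : Set (Set X),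
        (∀ x : X, ∃ Y ∈ 𝒴, ∃ y ∈ Y, d x y ≤ C) ∧
        (∀ Y ∈ 𝒴, IsThickLE k ↥Y (restrictDist d Y) C) ∧
        ∀ Y ∈ 𝒴, ∀ Y' ∈ 𝒴, ∃ m : ℕ, ∃ c : Fin (m + 1) → Set X,
          (∀ i, c i ∈ 𝒴) ∧ c 0 = Y ∧ c (Fin.last m) = Y' ∧
          ∀ i : Fin m, InfiniteDiam d
            ({x : X | ∃ y ∈ c i.castSucc, d x y ≤ C} ∩ c i.succ)

/-- `X` is `C`-thick of order at most `k ≥ 1` **with respect to** the collection `𝒴`. -/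
def IsThickCollection (X : Type u) (d : X → X → ℝ) (C : ℝ) (k : ℕ) (𝒴 : Set (Set X)) : Prop :=
  (∀ x : X, ∃ Y ∈ 𝒴, ∃ y ∈ Y, d x y ≤ C) ∧
  (∀ Y ∈ 𝒴, IsThickLE (k - 1) ↥Y (restrictDist d Y) C) ∧
  ∀ Y ∈ 𝒴, ∀ Y' ∈ 𝒴, ∃ m : ℕ, ∃ c : Fin (m + 1) → Set X,
    (∀ i, c i ∈ 𝒴) ∧ c 0 = Y ∧ c (Fin.last m) = Y' ∧
    ∀ i : Fin m, InfiniteDiam d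
      ({x : X | ∃ y ∈ c i.castSucc, d x y ≤ C} ∩ c i.succ)

/-- The path metric of a graph, as a real-valued distance function on the vertices. -/
noncomputable def graphDist (G : SimpleGraph V) : V → V → ℝ :=
  fun x y => (G.dist x y : ℝ)

/-- The Cayley graph of a group with respect to a generating set `S`: vertices are group
elements, with an edge joining `g` and `g * s` for each `g` and each `s ∈ S \ {1}`. -/
def cayleyGraph (Γ : Type u) [Group Γ] (S : Set Γ) : SimpleGraph Γ :=
  SimpleGraph.fromRel fun g h => ∃ s ∈ S, h = g * s


section Auxiliary

lemma IsFloydFunction.anti {f : ℕ → ℝ} (hf : IsFloydFunction f) : Antitone f := by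
  apply antitone_nat_of_succ_le
  intro n
  cases n with
  | zero => rw [hf.zero_eq]
  | succ n =>
    obtain ⟨K, hK, hr⟩ := hf.ratio
    have h := (hr (n + 1) (by omega)).1
    have hp := hf.pos (n + 2)
    rw [le_div_iff₀ hp] at h
    linarith

lemma IsFloydFunction.summable' {f : ℕ → ℝ} (hf : IsFloydFunction f) : Summable f :=
  (summable_nat_add_iff 1).mp hf.summable

/-- Tail sums of a Floyd function. -/
noncomputable def ftail (f : ℕ → ℝ) (R : ℕ) : ℝ := ∑' k, f (k + R)

lemma ftail_tendsto (f : ℕ → ℝ) : Tendsto (ftail f) atTop (nhds 0) :=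
  tendsto_sum_nat_add f

lemma sum_Ico_le_ftail {f : ℕ → ℝ} (hf : IsFloydFunction f) (R D : ℕ) :
    ∑ k ∈ Finset.Ico R D, f k ≤ ftail f R := by
  rw [Finset.sum_Ico_eq_sum_range]
  have hs : Summable fun k => f (k + R) := (summable_nat_add_iff R).mpr hf.summable'
  have h := Summable.sum_le_tsum (Finset.range (D - R)) (fun i _ => (hf.pos _).le) hs
  calc ∑ i ∈ Finset.range (D - R), f (R + i)
      = ∑ i ∈ Finset.range (D - R), f (i + R) := by
        refine Finset.sum_congr rfl fun i _ => by rw [Nat.add_comm]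
    _ ≤ ftail f R := h

lemma tendsto_nat_mul_floyd {f : ℕ → ℝ} (hf : IsFloydFunction f) :
    Tendsto (fun n : ℕ => (n : ℝ) * f n) atTop (nhds 0) := by
  rw [Metric.tendsto_atTop]
  intro ε hε
  obtain ⟨N, hN⟩ := (Metric.tendsto_atTop.mp (ftail_tendsto f)) (ε / 2) (by linarith)
  refine ⟨2 * N + 1, fun n hn => ?_⟩
  have hfn : 0 ≤ f n := (hf.pos n).le
  have h1 : ((n - N : ℕ) : ℝ) * f n ≤ ∑ k ∈ Finset.Ico N n, f k := by
    have := Finset.card_nsmul_le_sum (Finset.Ico N n) f (f n)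
      (fun k hk => hf.anti (le_of_lt (Finset.mem_Ico.mp hk).2))
    simpa [Nat.card_Ico, nsmul_eq_mul] using this
  have h2 : ∑ k ∈ Finset.Ico N n, f k ≤ ftail f N := sum_Ico_le_ftail hf N n
  have h3 : ftail f N < ε / 2 := by
    have := hN N le_rfl
    rw [Real.dist_eq, sub_zero] at this
    calc ftail f N ≤ |ftail f N| := le_abs_self _
      _ < ε / 2 := this
  have hcast : ((n - N : ℕ) : ℝ) = (n : ℝ) - N := by
    rw [Nat.cast_sub (by omega)]
  have h4 : (n : ℝ) ≤ 2 * ((n : ℝ) - N) := by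
    have : (2 * N + 1 : ℝ) ≤ n := by exact_mod_cast hn
    linarith
  rw [Real.dist_eq, sub_zero, abs_of_nonneg (mul_nonneg (Nat.cast_nonneg n) hfn)]
  calc (n : ℝ) * f n ≤ 2 * ((n : ℝ) - N) * f n := by
        apply mul_le_mul_of_nonneg_right h4 hfn
    _ = 2 * (((n : ℝ) - N) * f n) := by ring
    _ < ε := by
        have : ((n : ℝ) - N) * f n < ε / 2 := by
          rw [← hcast]; exact lt_of_le_of_lt (h1.trans h2) h3
        linarith

lemma exists_closer (G : SimpleGraph V) (hconn : G.Connected) (b u : V)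
    (h : G.dist b u ≠ 0) :
    ∃ w : V, G.Adj u w ∧ G.dist b w + 1 = G.dist b u := by
  obtain ⟨p, hp⟩ := (hconn b u).exists_walk_length_eq_dist
  set q := p.reverse with hq
  have hql : q.length = G.dist b u := by rw [hq, SimpleGraph.Walk.length_reverse, hp]
  have hnn : ¬ q.Nil := by
    rw [SimpleGraph.Walk.not_nil_iff_lt_length, hql]
    omega
  have hadj : G.Adj u (q.getVert 1) := q.adj_snd hnn
  refine ⟨q.getVert 1, hadj, ?_⟩
  have htail : q.tail.length + 1 = q.length := SimpleGraph.Walk.length_tail_add_one hnn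
  have hle : G.dist b (q.getVert 1) ≤ q.length - 1 := by
    calc G.dist b (q.getVert 1) = G.dist (q.getVert 1) b := SimpleGraph.dist_comm ..
      _ ≤ q.tail.length := SimpleGraph.dist_le q.tail
      _ = q.length - 1 := by omega
  have hge : G.dist b u ≤ G.dist b (q.getVert 1) + 1 := by
    calc G.dist b u ≤ G.dist b (q.getVert 1) + G.dist (q.getVert 1) u := hconn.dist_triangle
      _ ≤ G.dist b (q.getVert 1) + 1 := by
          have := SimpleGraph.dist_le hadj.symm.toWalk
          simp at this
          omega
  omega

lemma ball_finite (G : SimpleGraph V) (hconn : G.Connected)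
    (hlf : ∀ v : V, (G.neighborSet v).Finite) (b : V) :
    ∀ n : ℕ, {v : V | G.dist b v ≤ n}.Finite := by
  intro n
  induction n with
  | zero =>
    apply Set.Finite.subset (Set.finite_singleton b)
    intro v hv
    simp only [Set.mem_setOf_eq, Nat.le_zero] at hv
    have : b = v := ((hconn b v).dist_eq_zero_iff).mp hv
    simp [this.symm]
  | succ n ih =>
    apply Set.Finite.subset (ih.union (Set.Finite.biUnion ih (fun w _ => hlf w)))
    intro v hv
    simp only [Set.mem_setOf_eq] at hv
    by_cases hd : G.dist b v ≤ n
    · exact Or.inl hd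
    · right
      have hne : G.dist b v ≠ 0 := by omega
      obtain ⟨w, hadj, hw⟩ := exists_closer G hconn b v hne
      refine Set.mem_biUnion
        (show w ∈ {v : V | G.dist b v ≤ n} by simp only [Set.mem_setOf_eq]; omega) ?_
      exact hadj.symm

lemma exists_far (G : SimpleGraph V) (hinf : Infinite V) (hconn : G.Connected)
    (hlf : ∀ v : V, (G.neighborSet v).Finite) (b : V) (n : ℕ) :
    ∃ v : V, n < G.dist b v := by
  by_contra hc
  push_neg at hc
  have : (Set.univ : Set V).Finite := by
    apply Set.Finite.subset (ball_finite G hconn hlf b n)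
    intro v _
    exact hc v
  exact Set.infinite_univ this

variable {G : SimpleGraph V} {f : ℕ → ℝ} {b : V}

lemma edgeFloydLength_symm (e : G.Dart) :
    edgeFloydLength G f b e.symm = edgeFloydLength G f b e := by
  simp [edgeFloydLength, SimpleGraph.Dart.symm_toProd, min_comm]

lemma floydLength_nonneg (hf : ∀ n, 0 ≤ f n) {u v : V} (p : G.Walk u v) :
    0 ≤ floydLength G f b p := by
  apply List.sum_nonneg
  intro x hx
  obtain ⟨d, _, rfl⟩ := List.mem_map.mp hx
  exact hf _

lemma floydLength_append {u v w : V} (p : G.Walk u v) (q : G.Walk v w) :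
    floydLength G f b (p.append q) = floydLength G f b p + floydLength G f b q := by
  simp [floydLength, SimpleGraph.Walk.darts_append]

lemma floydLength_reverse {u v : V} (p : G.Walk u v) :
    floydLength G f b p.reverse = floydLength G f b p := by
  simp [floydLength, SimpleGraph.Walk.darts_reverse, List.map_reverse, List.map_map,
    Function.comp_def, edgeFloydLength_symm, List.sum_reverse]

lemma floydLength_cons {u v w : V} (h : G.Adj u v) (p : G.Walk v w) :
    floydLength G f b (SimpleGraph.Walk.cons h p) =
      f (min (G.dist b u) (G.dist b v)) + floydLength G f b p := by
  simp [floydLength, SimpleGraph.Walk.darts_cons, edgeFloydLength]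

lemma floydDist_le (hf : ∀ n, 0 ≤ f n) {u v : V} (p : G.Walk u v) :
    floydDist G f b u v ≤ floydLength G f b p :=
  csInf_le ⟨0, fun _ ⟨q, hq⟩ => hq ▸ floydLength_nonneg hf q⟩ ⟨p, rfl⟩

lemma floydDist_nonneg (hconn : G.Connected) (hf : ∀ n, 0 ≤ f n) (u v : V) :
    0 ≤ floydDist G f b u v := by
  obtain ⟨p⟩ := hconn u v
  exact le_csInf ⟨_, ⟨p, rfl⟩⟩ (fun _ ⟨q, hq⟩ => hq ▸ floydLength_nonneg hf q)

lemma exists_descend (hconn : G.Connected) (hf : IsFloydFunction f) (R : ℕ) :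
    ∀ (D : ℕ) (u : V), G.dist b u = D → R ≤ D →
    ∃ (u' : V) (q : G.Walk u u'), G.dist b u' = R ∧
      floydLength G f b q ≤ ∑ k ∈ Finset.Ico R D, f k := by
  intro D
  induction D with
  | zero =>
    intro u hu hR
    refine ⟨u, SimpleGraph.Walk.nil, by omega, ?_⟩
    have : R = 0 := by omega
    simp [floydLength, this]
  | succ D ih =>
    intro u hu hR
    rcases eq_or_lt_of_le hR with he | hlt
    · refine ⟨u, SimpleGraph.Walk.nil, by omega, ?_⟩
      have h0 : floydLength G f b (SimpleGraph.Walk.nil : G.Walk u u) = 0 := by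
        simp [floydLength]
      rw [h0]
      exact Finset.sum_nonneg fun k _ => (hf.pos k).le
    · have hR' : R ≤ D := by omega
      obtain ⟨w, hadj, hw⟩ := exists_closer G hconn b u (by omega)
      have hwD : G.dist b w = D := by omega
      obtain ⟨u', q, h1, h2⟩ := ih w hwD hR'
      refine ⟨u', SimpleGraph.Walk.cons hadj q, h1, ?_⟩
      rw [floydLength_cons, Finset.sum_Ico_succ_top hR']
      have hmin : min (G.dist b u) (G.dist b w) = D := by
        rw [hu, hwD]
        exact min_eq_right (Nat.le_succ D)
      rw [hmin]
      linarith

lemma divwalk_floyd_bound (hf : IsFloydFunction f) {u v : V} (p : G.Walk u v)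
    {x L : ℝ} (hx : 0 ≤ x) (hsupp : ∀ z ∈ p.support, x < (G.dist b z : ℝ))
    (hlen : (p.length : ℝ) ≤ L) :
    floydLength G f b p ≤ L * f (⌊x⌋₊ + 1) := by
  set m₀ := ⌊x⌋₊ + 1 with hm₀
  have key : ∀ y ∈ p.darts.map (edgeFloydLength G f b), y ≤ f m₀ := by
    intro y hy
    obtain ⟨d, hd, rfl⟩ := List.mem_map.mp hy
    have h1 := hsupp d.toProd.1 (p.dart_fst_mem_support_of_mem_darts hd)
    have h2 := hsupp d.toProd.2 (p.dart_snd_mem_support_of_mem_darts hd)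
    have hfl1 : ⌊x⌋₊ < G.dist b d.toProd.1 := (Nat.floor_lt hx).mpr h1
    have hfl2 : ⌊x⌋₊ < G.dist b d.toProd.2 := (Nat.floor_lt hx).mpr h2
    have hm : m₀ ≤ min (G.dist b d.toProd.1) (G.dist b d.toProd.2) := by
      rw [hm₀]
      exact le_min hfl1 hfl2
    exact hf.anti hm
  have hsum := List.sum_le_card_nsmul _ (f m₀) key
  rw [List.length_map, SimpleGraph.Walk.length_darts] at hsum
  calc floydLength G f b p ≤ p.length • f m₀ := hsum
    _ = (p.length : ℝ) * f m₀ := by rw [nsmul_eq_mul]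
    _ ≤ L * f m₀ := mul_le_mul_of_nonneg_right hlen (hf.pos m₀).le

lemma exists_div_walk (hconn : G.Connected) {γ δ A B : ℝ}
    (hlin : ∀ n : ℕ, graphDivergence G γ δ n ≤ ENNReal.ofReal (A * (n : ℝ) + B))
    (R : ℕ) (hR : 1 ≤ R) {u' v' : V} (hu' : G.dist b u' = R) (hv' : G.dist b v' = R) :
    ∃ p : G.Walk u' v', ((p.length : ℝ) ≤ max (A * (2 * R) + B) 0 + 1) ∧
      ∀ z ∈ p.support, δ * R - γ < (G.dist b z : ℝ) := by
  have hyp : 0 < min (G.dist b u') (G.dist b v') ∧ G.dist u' v' ≤ 2 * R := by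
    constructor
    · rw [hu', hv']; omega
    · have ht : G.dist u' v' ≤ G.dist u' b + G.dist b v' := hconn.dist_triangle
      have hc : G.dist u' b = G.dist b u' := SimpleGraph.dist_comm ..
      omega
  have hstep : (⨅ p : {p : G.Walk u' v' // ∀ z ∈ p.support,
      δ * (↑(min (G.dist b u') (G.dist b v')) : ℝ) - γ < (G.dist b z : ℝ)},
      (p.1.length : ℝ≥0∞)) ≤ graphDivergence G γ δ (2 * R) := by
    apply le_iSup_of_le u'
    apply le_iSup_of_le v'
    apply le_iSup_of_le b
    exact le_iSup_of_le hyp le_rfl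
  have hle : (⨅ p : {p : G.Walk u' v' // ∀ z ∈ p.support,
      δ * (↑(min (G.dist b u') (G.dist b v')) : ℝ) - γ < (G.dist b z : ℝ)},
      (p.1.length : ℝ≥0∞)) ≤ ENNReal.ofReal (A * (2 * R) + B) := by
    refine hstep.trans (le_trans (hlin (2 * R)) ?_)
    apply le_of_eq
    congr 1
    push_cast
    ring
  have hmaxpos : (0 : ℝ) < max (A * (2 * R) + B) 0 + 1 := by
    have := le_max_right (A * (2 * R) + B) 0
    linarith
  have hne : Nonempty {p : G.Walk u' v' // ∀ z ∈ p.support,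
      δ * (↑(min (G.dist b u') (G.dist b v')) : ℝ) - γ < (G.dist b z : ℝ)} := by
    by_contra h
    rw [not_nonempty_iff] at h
    rw [iInf_of_empty] at hle
    exact ENNReal.ofReal_ne_top (top_le_iff.mp hle)
  have hlt : (⨅ p : {p : G.Walk u' v' // ∀ z ∈ p.support,
      δ * (↑(min (G.dist b u') (G.dist b v')) : ℝ) - γ < (G.dist b z : ℝ)},
      (p.1.length : ℝ≥0∞)) < ENNReal.ofReal (max (A * (2 * R) + B) 0 + 1) := by
    refine lt_of_le_of_lt hle ?_
    refine lt_of_le_of_lt (ENNReal.ofReal_le_ofReal (le_max_left _ 0)) ?_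
    rw [ENNReal.ofReal_lt_ofReal_iff hmaxpos]
    linarith
  obtain ⟨p, hp⟩ := iInf_lt_iff.mp hlt
  have hlenp : ((p.1.length : ℕ) : ℝ) < max (A * (2 * R) + B) 0 + 1 := by
    rw [← ENNReal.ofReal_natCast] at hp
    exact (ENNReal.ofReal_lt_ofReal_iff hmaxpos).mp hp
  refine ⟨p.1, hlenp.le, fun z hz => ?_⟩
  have := p.2 z hz
  rw [hu', hv', min_self] at this
  exact this

lemma floyd_key (hinf : Infinite V) (hconn : G.Connected)
    (hlf : ∀ v : V, (G.neighborSet v).Finite)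
    {γ δ A B : ℝ} (hδ0 : 0 < δ) (hγ : 0 ≤ γ)
    (hlin : ∀ n : ℕ, graphDivergence G γ δ n ≤ ENNReal.ofReal (A * (n : ℝ) + B))
    (hf : IsFloydFunction f) :
    ∀ ε : ℝ, 0 < ε → ∃ R₀ : ℕ, ∀ u v : V,
      R₀ ≤ G.dist b u → R₀ ≤ G.dist b v → floydDist G f b u v < ε := by
  set C₁ : ℝ := 2 * |A| / δ with hC₁
  set C₂ : ℝ := C₁ * γ + |B| + 1 with hC₂
  set m₀ : ℕ → ℕ := fun R => ⌊δ * R - γ⌋₊ + 1 with hm₀def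
  have hC₁0 : 0 ≤ C₁ := by positivity
  have hδlin : Tendsto (fun R : ℕ => δ * R - γ) atTop atTop := by
    have h1 : Tendsto (fun R : ℕ => (R : ℝ)) atTop atTop := tendsto_natCast_atTop_atTop
    have h2 := h1.const_mul_atTop hδ0
    have h3 := tendsto_atTop_add_const_right atTop (-γ) h2
    simpa [sub_eq_add_neg] using h3
  have hm₀ : Tendsto m₀ atTop atTop := by
    refine tendsto_atTop_mono ?_ (tendsto_nat_floor_atTop.comp hδlin)
    intro R
    simp [hm₀def]
  have hbound : Tendsto (fun R : ℕ => 2 * ftail f R +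
      (C₁ * ((m₀ R : ℝ) * f (m₀ R)) + C₂ * f (m₀ R))) atTop (nhds 0) := by
    have t1 : Tendsto (fun R : ℕ => 2 * ftail f R) atTop (nhds (2 * 0)) :=
      (ftail_tendsto f).const_mul 2
    have t2 : Tendsto (fun R : ℕ => (m₀ R : ℝ) * f (m₀ R)) atTop (nhds 0) :=
      (tendsto_nat_mul_floyd hf).comp hm₀
    have t3 : Tendsto (fun R : ℕ => f (m₀ R)) atTop (nhds 0) :=
      (hf.summable'.tendsto_atTop_zero).comp hm₀
    have := t1.add ((t2.const_mul C₁).add (t3.const_mul C₂))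
    simpa using this
  intro ε hε
  have hev1 := hbound.eventually (gt_mem_nhds hε)
  have hev2 : ∀ᶠ R : ℕ in atTop, (1 : ℝ) ≤ δ * R - γ := hδlin.eventually_ge_atTop 1
  have hev3 : ∀ᶠ R : ℕ in atTop, 1 ≤ R := eventually_ge_atTop 1
  obtain ⟨R, ⟨h1, h2⟩, h3⟩ := ((hev1.and hev2).and hev3).exists
  refine ⟨R, fun u v hu hv => ?_⟩
  obtain ⟨u', q1, hu'1, hq1⟩ := exists_descend hconn hf R (G.dist b u) u rfl hu
  obtain ⟨v', q2, hv'1, hq2⟩ := exists_descend hconn hf R (G.dist b v) v rfl hv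
  obtain ⟨p, hplen, hpsupp⟩ := exists_div_walk hconn hlin R h3 hu'1 hv'1
  have hx0 : (0 : ℝ) ≤ δ * R - γ := by linarith
  have hLp : floydLength G f b p ≤ (max (A * (2 * R) + B) 0 + 1) * f (m₀ R) :=
    divwalk_floyd_bound hf p hx0 hpsupp hplen
  have hδRm : δ * R ≤ (m₀ R : ℝ) + γ := by
    have := Nat.lt_floor_add_one (δ * R - γ)
    have hcast : ((m₀ R : ℕ) : ℝ) = (⌊δ * R - γ⌋₊ : ℝ) + 1 := by
      rw [hm₀def]; push_cast; ring
    rw [hcast]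
    linarith
  have hmax : max (A * (2 * R) + B) 0 + 1 ≤ C₁ * (m₀ R : ℝ) + C₂ := by
    have hA : A * (2 * R) + B ≤ |A| * (2 * R) + |B| := by
      have := mul_le_mul_of_nonneg_right (le_abs_self A) (by positivity : (0:ℝ) ≤ 2 * R)
      have := le_abs_self B
      linarith
    have h0' : (0 : ℝ) ≤ |A| * (2 * R) + |B| := by positivity
    have heq : |A| * (2 * (R : ℝ)) = C₁ * (δ * R) := by
      rw [hC₁]; field_simp
    have hCR : C₁ * (δ * R) ≤ C₁ * ((m₀ R : ℝ) + γ) := mul_le_mul_of_nonneg_left hδRm hC₁0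
    have := max_le hA h0'
    rw [hC₂]
    nlinarith [this, heq, hCR]
  have hLp2 : floydLength G f b p ≤ C₁ * ((m₀ R : ℝ) * f (m₀ R)) + C₂ * f (m₀ R) := by
    calc floydLength G f b p ≤ (max (A * (2 * R) + B) 0 + 1) * f (m₀ R) := hLp
      _ ≤ (C₁ * (m₀ R : ℝ) + C₂) * f (m₀ R) :=
          mul_le_mul_of_nonneg_right hmax (hf.pos _).le
      _ = C₁ * ((m₀ R : ℝ) * f (m₀ R)) + C₂ * f (m₀ R) := by ring
  have hq1' : floydLength G f b q1 ≤ ftail f R :=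
    hq1.trans (sum_Ico_le_ftail hf R (G.dist b u))
  have hq2' : floydLength G f b q2 ≤ ftail f R :=
    hq2.trans (sum_Ico_le_ftail hf R (G.dist b v))
  have hW := floydDist_le (b := b) (fun n => (hf.pos n).le)
    (q1.append (p.append q2.reverse)) (u := u) (v := v)
  rw [floydLength_append, floydLength_append, floydLength_reverse] at hW
  calc floydDist G f b u v
      ≤ floydLength G f b q1 + (floydLength G f b p + floydLength G f b q2) := hW
    _ ≤ 2 * ftail f R + (C₁ * ((m₀ R : ℝ) * f (m₀ R)) + C₂ * f (m₀ R)) := by linarith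
    _ < ε := h1

end Auxiliary

/-- Let `X` be a locally finite, infinite, connected graph whose divergence function
`Div_{X,γ,δ}(n)` is bounded above by a linear function of `n`, for some `0 < δ < 1` and
`γ ≥ 0`. Then for every Floyd function `f` the Floyd boundary `∂_f X` consists of exactly
one point. -/
theorem floyd_boundary_one_point_of_linear_divergence
    {V : Type u} (G : SimpleGraph V) (hinf : Infinite V) (hconn : G.Connected)
    (hlf : ∀ v : V, (G.neighborSet v).Finite) (b : V)
    (γ δ : ℝ) (hδ0 : 0 < δ) (hδ1 : δ < 1) (hγ : 0 ≤ γ)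
    (hlin : ∃ A B : ℝ, ∀ n : ℕ,
      graphDivergence G γ δ n ≤ ENNReal.ofReal (A * (n : ℝ) + B))
    (f : ℕ → ℝ) (hf : IsFloydFunction f) :
    FloydBoundaryOnePoint G f b := by
  obtain ⟨A, B, hlinAB⟩ := hlin
  have key := floyd_key (b := b) (f := f) hinf hconn hlf hδ0 hγ hlinAB hf
  have hs : ∀ n : ℕ, ∃ v : V, n < G.dist b v := fun n => exists_far G hinf hconn hlf b n
  set s : ℕ → V := fun n => (hs n).choose with hsdef
  have hsn : ∀ n, n < G.dist b (s n) := fun n => (hs n).choose_spec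
  have hesc : Escapes G b s := by
    intro n
    exact ⟨n + 1, fun m hm => lt_of_le_of_lt (by omega) (hsn m)⟩
  have hcauchy : IsFloydCauchy G f b s := by
    intro ε hε
    obtain ⟨R₀, hR₀⟩ := key ε hε
    refine ⟨R₀, fun m n hm hn => hR₀ _ _ ?_ ?_⟩
    · exact le_of_lt (lt_of_le_of_lt hm (hsn m))
    · exact le_of_lt (lt_of_le_of_lt hn (hsn n))
  refine ⟨Quot.mk _ ⟨s, hcauchy, hesc⟩, ?_⟩
  intro q
  induction q using Quot.ind with
  | _ t =>
  apply Quot.sound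
  show Tendsto (fun n => floydDist G f b (t.1 n) (s n)) atTop (nhds 0)
  rw [Metric.tendsto_atTop]
  intro ε hε
  obtain ⟨R₀, hR₀⟩ := key ε hε
  obtain ⟨N₁, hN₁⟩ := t.2.2 R₀
  refine ⟨max N₁ R₀, fun n hn => ?_⟩
  have hd1 : R₀ ≤ G.dist b (t.1 n) := le_of_lt (hN₁ n (le_trans (le_max_left _ _) hn))
  have hd2 : R₀ ≤ G.dist b (s n) :=
    le_of_lt (lt_of_le_of_lt (le_trans (le_max_right _ _) hn) (hsn n))
  have hnn := floydDist_nonneg (b := b) (f := f) hconn (fun k => (hf.pos k).le) (t.1 n) (s n)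
  rw [Real.dist_eq, sub_zero, abs_of_nonneg hnn]
  exact hR₀ _ _ hd1 hd2


end FloydPaper
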